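/- Let k ≥ 3, m ≥ 1, and t ≥ 1 be integers with t² ≤ m, and set b = ⌈m/t⌉. Then N^3_k(m) ≤ b·N^3_k(t) + N^3_{k−2}(b) + 3m (an inequality in the extended naturals). -/

import Mathlib

/-- The alternating list `a b a b ...` of length `l`. -/
def altList (a b : ℕ) : ℕ → List ℕ
  | 0 => []
  | l + 1 => a :: altList b a l

/-- `S` contains an alternation of length `l`: two distinct symbols occur as an
alternating (not necessarily contiguous) subsequence of length `l`. -/
def HasAlt (S : List ℕ) (l : ℕ) : Prop :=
  ∃ a b : ℕ, a ≠ b ∧ (altList a b l).Sublist S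

/-- A Davenport–Schinzel sequence of order `s`: no two adjacent equal entries and
no alternation of length `s + 2`. -/
def IsDS (s : ℕ) (S : List ℕ) : Prop :=
  List.Chain' (· ≠ ·) S ∧ ¬ HasAlt S (s + 2)

/-- `S` can be partitioned into at most `m` contiguous blocks, each consisting of
pairwise distinct symbols. -/
def HasBlocks (S : List ℕ) (m : ℕ) : Prop :=
  ∃ Bs : List (List ℕ), Bs.length ≤ m ∧ S = Bs.flatten ∧ ∀ B ∈ Bs, B.Nodup

/-- `λ_s(n)`: maximum length of a Davenport–Schinzel sequence of order `s`
using at most `n` distinct symbols. -/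
noncomputable def lambdaDS (s n : ℕ) : ℕ :=
  sSup {L | ∃ S : List ℕ, IsDS s S ∧ S.toFinset.card ≤ n ∧ S.length = L}

/-- `ψ_s(m,n)`: maximum length of a Davenport–Schinzel sequence of order `s` on at
most `n` distinct symbols partitionable into at most `m` blocks of distinct symbols. -/
noncomputable def psiDS (s m n : ℕ) : ℕ :=
  sSup {L | ∃ S : List ℕ, IsDS s S ∧ S.toFinset.card ≤ n ∧ HasBlocks S m ∧ S.length = L}

/-- The Ackermann hierarchy: `A_1(n) = 2n`, and `A_k(n) = A_{k-1}^{(n)}(1)` for `k ≥ 2`. -/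
def Ak : ℕ → ℕ → ℕ
  | 0, n => n + 1
  | 1, n => 2 * n
  | k + 2, n => (Ak (k + 1))^[n] 1

/-- The Ackermann function `A(n) = A_n(3)`. -/
def AckF (n : ℕ) : ℕ := Ak n 3

/-- `α_k(x) = min {n | A_k(n) ≥ x}`. -/
noncomputable def invAk (k x : ℕ) : ℕ := sInf {n | x ≤ Ak k n}

/-- `α(x) = min {n | A(n) ≥ x}`. -/
noncomputable def invA (x : ℕ) : ℕ := sInf {n | x ≤ AckF n}

/-- An `ADS^s_k(m)`-sequence: at most `m` blocks of distinct symbols, every occurring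
symbol appears at least `k` times, and no alternation of length `s + 2`. -/
def IsADS (s k m : ℕ) (S : List ℕ) : Prop :=
  HasBlocks S m ∧ (∀ a ∈ S, k ≤ S.count a) ∧ ¬ HasAlt S (s + 2)

/-- `N^s_k(m)`: the supremum (possibly infinite) of the number of distinct symbols
in an `ADS^s_k(m)`-sequence. -/
noncomputable def NADS (s k m : ℕ) : ℕ∞ :=
  sSup {c : ℕ∞ | ∃ S : List ℕ, IsADS s k m S ∧ c = (S.toFinset.card : ℕ∞)}

/-- `S` is `r`-sparse: any at most `r` consecutive entries are pairwise distinct. -/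
def Sparse (r : ℕ) (S : List ℕ) : Prop :=
  ∀ l : List ℕ, l <:+: S → l.length ≤ r → l.Nodup

/-- `S` contains the pattern `u`: some subsequence of `S` is an injectively renamed
copy of `u`. -/
def ContainsPat (S u : List ℕ) : Prop :=
  ∃ f : ℕ → ℕ, Set.InjOn f {a | a ∈ u} ∧ (u.map f).Sublist S

/-- `Ex_u(n)`: maximum length of an `r`-sparse `u`-free sequence on at most `n`
distinct symbols, where `r` is the number of distinct symbols of `u`. -/
noncomputable def ExDS (u : List ℕ) (n : ℕ) : ℕ :=
  sSup {L | ∃ S : List ℕ, Sparse u.toFinset.card S ∧ ¬ ContainsPat S u ∧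
    S.toFinset.card ≤ n ∧ S.length = L}

/-- An `(r,s)`-formation: a concatenation of `s` permutations of a single set of
`r` distinct symbols. -/
def IsFormation (r s : ℕ) (F : List ℕ) : Prop :=
  ∃ A : Finset ℕ, A.card = r ∧ ∃ Bs : List (List ℕ), Bs.length = s ∧
    (∀ B ∈ Bs, B.Nodup ∧ B.toFinset = A) ∧ F = Bs.flatten

/-- An `(r,s)`-formation-free sequence: `r`-sparse and containing no
`(r,s)`-formation as a subsequence. -/
def FormationFree (r s : ℕ) (S : List ℕ) : Prop :=
  Sparse r S ∧ ¬ ∃ F : List ℕ, IsFormation r s F ∧ F.Sublist S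

/-- `F_{r,s}(n)`: maximum length of an `(r,s)`-formation-free sequence on at most
`n` distinct symbols. -/
noncomputable def FDS (r s n : ℕ) : ℕ :=
  sSup {L | ∃ S : List ℕ, FormationFree r s S ∧ S.toFinset.card ≤ n ∧ S.length = L}

/-!
Cut the at most `m` blocks into `b = ⌈m/t⌉` groups of `t` consecutive blocks and sort the
symbols by the number `d` of groups they meet. The symbols with `d = 1`, restricted to their
group, form an `ADS^3_k(t)`-sequence; the symbols with `d ≥ k - 2`, written once in each group
they meet, form an `ADS^3_{k-2}(b)`-sequence. Every other symbol occurs at least `d + 3` times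
in `d ≥ 2` groups, so it occurs twice in a group that is neither its first nor its last, or three
times in a group that is not its last, or three times in a group that is not its first. In each
of these three cases, charging the symbol to the block of its second occurrence in such a group
is injective: two symbols `a`, `c` charged to the same block, with `a` before `c` there, would
yield an alternation `a c a c a` or `c a c a c`. Hence at most `3m` symbols remain.
-/

open Finset

section Blocks

variable {α : Type*}

def blockGroup (Bs : List (List α)) (t j : ℕ) : List (List α) :=
  (Bs.drop (j * t)).take t

theorem blockGroup_sublist (Bs : List (List α)) (t j : ℕ) : (blockGroup Bs t j).Sublist Bs :=
  (List.take_sublist _ _).trans (List.drop_sublist _ _)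

theorem flatten_map_blockGroup_range (Bs : List (List α)) (t n : ℕ) :
    ((List.range n).map (blockGroup Bs t)).flatten = Bs.take (n * t) := by
  induction n with
  | zero => simp
  | succ n ih =>
    rw [List.range_succ, List.map_append, List.flatten_append, ih, Nat.succ_mul, List.take_add]
    simp [blockGroup]

theorem getD_blockGroup (Bs : List (List α)) (t j q : ℕ) :
    (blockGroup Bs t j).getD q [] = if q < t then Bs.getD (j * t + q) [] else [] := by
  simp only [blockGroup, List.getD_eq_getElem?_getD, List.getElem?_take, List.getElem?_drop]
  split_ifs <;> rfl

variable [DecidableEq α]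

def blocksOf (Bs : List (List α)) (a : α) : Finset ℕ :=
  {i ∈ range Bs.length | a ∈ Bs.getD i []}

theorem mem_blocksOf {Bs : List (List α)} {a : α} {i : ℕ} :
    i ∈ blocksOf Bs a ↔ a ∈ Bs.getD i [] := by
  rw [blocksOf, mem_filter, mem_range, and_iff_right_iff_imp]
  intro h
  by_contra hi
  rw [List.getD_eq_default _ _ (not_lt.1 hi)] at h
  exact List.not_mem_nil h

theorem lt_length_of_mem_blocksOf {Bs : List (List α)} {a : α} {i : ℕ}
    (h : i ∈ blocksOf Bs a) : i < Bs.length :=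
  mem_range.1 (mem_filter.1 h).1

theorem mem_flatten_iff_nonempty_blocksOf {Bs : List (List α)} {a : α} :
    a ∈ Bs.flatten ↔ (blocksOf Bs a).Nonempty := by
  rw [List.mem_flatten]
  constructor
  · rintro ⟨B, hB, ha⟩
    obtain ⟨i, hi, rfl⟩ := List.mem_iff_getElem.1 hB
    exact ⟨i, mem_blocksOf.2 (by rwa [List.getD_eq_getElem _ _ hi])⟩
  · rintro ⟨i, hi⟩
    have ha := mem_blocksOf.1 hi
    rw [List.getD_eq_getElem _ _ (lt_length_of_mem_blocksOf hi)] at ha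
    exact ⟨_, List.getElem_mem _, ha⟩

theorem count_flatten_eq_card_blocksOf {Bs : List (List α)} (hnd : ∀ B ∈ Bs, B.Nodup)
    (a : α) : Bs.flatten.count a = #(blocksOf Bs a) := by
  rw [List.count_flatten, blocksOf, card_filter, sum_range, ← Fin.sum_univ_fun_getElem]
  refine sum_congr rfl fun i _ => ?_
  rw [List.getD_eq_getElem _ _ i.2, (hnd _ (List.getElem_mem _)).count]

def groupsOf (Bs : List (List α)) (t : ℕ) (a : α) : Finset ℕ :=
  (blocksOf Bs a).image (· / t)

def blocksInGroup (Bs : List (List α)) (t : ℕ) (a : α) (j : ℕ) : Finset ℕ :=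
  {i ∈ blocksOf Bs a | i / t = j}

theorem map_blocksOf_blockGroup {t : ℕ} (ht : 0 < t) (Bs : List (List α)) (a : α) (j : ℕ) :
    (blocksOf (blockGroup Bs t j) a).map (addLeftEmbedding (j * t)) = blocksInGroup Bs t a j := by
  ext i
  simp only [mem_map, mem_blocksOf, getD_blockGroup, blocksInGroup, mem_filter,
    addLeftEmbedding_apply, Nat.div_eq_iff ht]
  constructor
  · rintro ⟨q, hq, rfl⟩
    split_ifs at hq with hqt
    · exact ⟨hq, by omega⟩
    · exact absurd hq List.not_mem_nil
  · rintro ⟨hi, hlo, hhi⟩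
    exact ⟨i - j * t, by rw [if_pos (by omega), Nat.add_sub_cancel' hlo]; exact hi, by omega⟩

theorem count_flatten_blockGroup {Bs : List (List α)} (hnd : ∀ B ∈ Bs, B.Nodup) {t : ℕ}
    (ht : 0 < t) (a : α) (j : ℕ) :
    (blockGroup Bs t j).flatten.count a = #(blocksInGroup Bs t a j) := by
  rw [count_flatten_eq_card_blocksOf fun B hB => hnd B ((blockGroup_sublist Bs t j).subset hB),
    ← map_blocksOf_blockGroup ht, card_map]

theorem mem_flatten_blockGroup {t : ℕ} (ht : 0 < t) {Bs : List (List α)} {a : α} {j : ℕ} :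
    a ∈ (blockGroup Bs t j).flatten ↔ j ∈ groupsOf Bs t a := by
  rw [mem_flatten_iff_nonempty_blocksOf, ← map_nonempty (f := addLeftEmbedding (j * t)),
    map_blocksOf_blockGroup ht]
  simp [groupsOf, blocksInGroup, Finset.Nonempty]

theorem groupsOf_subset_range {Bs : List (List α)} {t n : ℕ} (hlen : Bs.length ≤ n * t)
    (a : α) : groupsOf Bs t a ⊆ range n := by
  intro j hj
  obtain ⟨i, hi, rfl⟩ := mem_image.1 hj
  exact mem_range.2 (Nat.div_lt_of_lt_mul ((lt_length_of_mem_blocksOf hi).trans_le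
    (by rwa [mul_comm])))

end Blocks

section Positions

variable {α : Type*}

theorem flatten_take_succ {Bs : List (List α)} {i : ℕ} (hi : i < Bs.length) :
    (Bs.take (i + 1)).flatten = (Bs.take i).flatten ++ Bs.getD i [] := by
  rw [List.take_succ_eq_append_getElem hi, List.getD_eq_getElem _ _ hi, List.flatten_append,
    List.flatten_singleton]

variable [DecidableEq α]

def flatPos (Bs : List (List α)) (i : ℕ) (a : α) : ℕ :=
  (Bs.take i).flatten.length + (Bs.getD i []).idxOf a

theorem getElem?_flatten_flatPos {Bs : List (List α)} {i : ℕ} {a : α} (h : a ∈ Bs.getD i []) :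
    Bs.flatten[flatPos Bs i a]? = some a := by
  have hi := lt_length_of_mem_blocksOf (mem_blocksOf.2 h)
  have hidx := List.idxOf_lt_length_iff.2 h
  have hsplit : Bs.flatten = (Bs.take i).flatten ++ Bs.getD i [] ++ (Bs.drop (i + 1)).flatten := by
    rw [← flatten_take_succ hi, ← List.flatten_append, List.take_append_drop]
  rw [hsplit, List.getElem?_append_left (by rw [List.length_append, flatPos]; omega),
    List.getElem?_append_right (by simp [flatPos]), flatPos, Nat.add_sub_cancel_left,
    List.getElem?_idxOf h]

theorem flatPos_lt_flatPos {Bs : List (List α)} {i i' : ℕ} {a : α} (hii' : i < i')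
    (ha : a ∈ Bs.getD i []) (c : α) : flatPos Bs i a < flatPos Bs i' c := by
  have hi := lt_length_of_mem_blocksOf (mem_blocksOf.2 ha)
  have hidx := List.idxOf_lt_length_iff.2 ha
  have hmono : (Bs.take (i + 1)).flatten.length ≤ (Bs.take i').flatten.length :=
    ((List.take_prefix_take_left hii').flatten).length_le
  rw [flatten_take_succ hi, List.length_append] at hmono
  unfold flatPos
  omega

theorem flatPos_ne_flatPos {Bs : List (List α)} {i : ℕ} {a c : α} (ha : a ∈ Bs.getD i [])
    (hc : c ∈ Bs.getD i []) (hac : a ≠ c) : flatPos Bs i a ≠ flatPos Bs i c := fun h =>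
  hac (Option.some_injective _ ((getElem?_flatten_flatPos ha).symm.trans
    (h ▸ getElem?_flatten_flatPos hc)))

end Positions

theorem cons_sublist_drop {α : Type*} {S T : List α} {a : α} {p q : ℕ} (ha : S[p]? = some a)
    (hpq : p < q) (hT : T.Sublist (S.drop q)) : (a :: T).Sublist (S.drop p) := by
  obtain ⟨hp, rfl⟩ := List.getElem?_eq_some_iff.1 ha
  rw [List.drop_eq_getElem_cons hp]
  exact (hT.trans (List.drop_sublist_drop_left S hpq)).cons_cons _

theorem hasAlt_five {S : List ℕ} {x y : ℕ} (hxy : x ≠ y) {p₁ p₂ p₃ p₄ p₅ : ℕ}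
    (h₁₂ : p₁ < p₂) (h₂₃ : p₂ < p₃) (h₃₄ : p₃ < p₄) (h₄₅ : p₄ < p₅)
    (h₁ : S[p₁]? = some x) (h₂ : S[p₂]? = some y) (h₃ : S[p₃]? = some x)
    (h₄ : S[p₄]? = some y) (h₅ : S[p₅]? = some x) : HasAlt S 5 :=
  ⟨x, y, hxy, (cons_sublist_drop h₁ h₁₂ <| cons_sublist_drop h₂ h₂₃ <|
    cons_sublist_drop h₃ h₃₄ <| cons_sublist_drop h₄ h₄₅ <|
    cons_sublist_drop h₅ p₅.lt_succ_self <| List.nil_sublist _).trans (List.drop_sublist _ _)⟩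

theorem hasAlt_five_of_flatPos {Bs : List (List ℕ)} {x y : ℕ} (hxy : x ≠ y)
    {i₁ i₂ i₃ i₄ i₅ : ℕ} (h₁ : x ∈ Bs.getD i₁ []) (h₂ : y ∈ Bs.getD i₂ [])
    (h₃ : x ∈ Bs.getD i₃ []) (h₄ : y ∈ Bs.getD i₄ []) (h₅ : x ∈ Bs.getD i₅ [])
    (h₁₂ : flatPos Bs i₁ x < flatPos Bs i₂ y) (h₂₃ : flatPos Bs i₂ y < flatPos Bs i₃ x)
    (h₃₄ : flatPos Bs i₃ x < flatPos Bs i₄ y) (h₄₅ : flatPos Bs i₄ y < flatPos Bs i₅ x) :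
    HasAlt Bs.flatten 5 :=
  hasAlt_five hxy h₁₂ h₂₃ h₃₄ h₄₅ (getElem?_flatten_flatPos h₁)
    (getElem?_flatten_flatPos h₂) (getElem?_flatten_flatPos h₃) (getElem?_flatten_flatPos h₄)
    (getElem?_flatten_flatPos h₅)

theorem HasAlt.mono {S S' : List ℕ} {l : ℕ} (h : S.Sublist S') : HasAlt S l → HasAlt S' l :=
  fun ⟨a, b, hab, hs⟩ => ⟨a, b, hab, hs.trans h⟩

theorem card_toFinset_le_NADS {s k m : ℕ} {S : List ℕ} (h : IsADS s k m S) :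
    (#S.toFinset : ℕ∞) ≤ NADS s k m :=
  le_sSup ⟨S, h, rfl⟩

section Grouping

variable {Bs : List (List ℕ)} {t : ℕ}

def localBlocks (Bs : List (List ℕ)) (t j : ℕ) : List (List ℕ) :=
  (blockGroup Bs t j).map (List.filter fun a => #(groupsOf Bs t a) ≤ 1)

theorem flatten_localBlocks (Bs : List (List ℕ)) (t j : ℕ) :
    (localBlocks Bs t j).flatten =
      (blockGroup Bs t j).flatten.filter fun a => #(groupsOf Bs t a) ≤ 1 :=
  List.filter_flatten.symm

theorem isADS_flatten_localBlocks (ht : 0 < t) (hnd : ∀ B ∈ Bs, B.Nodup) {k : ℕ}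
    (hcount : ∀ a ∈ Bs.flatten, k ≤ Bs.flatten.count a) (hS : ¬ HasAlt Bs.flatten 5)
    (j : ℕ) : IsADS 3 k t (localBlocks Bs t j).flatten := by
  have hsub : (localBlocks Bs t j).flatten.Sublist Bs.flatten := by
    rw [flatten_localBlocks]
    exact List.filter_sublist.trans (blockGroup_sublist Bs t j).flatten
  refine ⟨⟨localBlocks Bs t j, ?_, rfl, ?_⟩, fun a ha => ?_, fun h => hS (h.mono hsub)⟩
  · simp [localBlocks, blockGroup]
  · simp only [localBlocks, List.mem_map]
    rintro _ ⟨B, hB, rfl⟩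
    exact (hnd B ((blockGroup_sublist Bs t j).subset hB)).filter _
  · rw [flatten_localBlocks, List.mem_filter, decide_eq_true_iff] at ha
    obtain ⟨ha, hloc⟩ := ha
    have hj := (mem_flatten_blockGroup ht).1 ha
    have hall : blocksInGroup Bs t a j = blocksOf Bs a :=
      filter_true_of_mem fun i hi => card_le_one.1 hloc _ (mem_image_of_mem _ hi) _ hj
    rw [flatten_localBlocks, List.count_filter (by simpa using hloc),
      count_flatten_blockGroup hnd ht, hall, ← count_flatten_eq_card_blocksOf hnd]
    exact hcount a (List.Sublist.subset (blockGroup_sublist Bs t j).flatten ha)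

theorem card_local_le (ht : 0 < t) (hnd : ∀ B ∈ Bs, B.Nodup) {k n : ℕ}
    (hcount : ∀ a ∈ Bs.flatten, k ≤ Bs.flatten.count a) (hS : ¬ HasAlt Bs.flatten 5)
    (hlen : Bs.length ≤ n * t) :
    (#{a ∈ Bs.flatten.toFinset | #(groupsOf Bs t a) ≤ 1} : ℕ∞) ≤ n * NADS 3 k t := by
  have hsub : {a ∈ Bs.flatten.toFinset | #(groupsOf Bs t a) ≤ 1} ⊆
      (range n).biUnion fun j => (localBlocks Bs t j).flatten.toFinset := by
    intro a ha
    obtain ⟨ha, hloc⟩ := mem_filter.1 ha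
    obtain ⟨i, hi⟩ := mem_flatten_iff_nonempty_blocksOf.1 (List.mem_toFinset.1 ha)
    have hj : i / t ∈ groupsOf Bs t a := mem_image_of_mem _ hi
    refine mem_biUnion.2 ⟨i / t, groupsOf_subset_range hlen a hj, ?_⟩
    rw [List.mem_toFinset, flatten_localBlocks, List.mem_filter, decide_eq_true_iff]
    exact ⟨(mem_flatten_blockGroup ht).2 hj, hloc⟩
  calc (#{a ∈ Bs.flatten.toFinset | #(groupsOf Bs t a) ≤ 1} : ℕ∞)
      ≤ ∑ j ∈ range n, (#(localBlocks Bs t j).flatten.toFinset : ℕ∞) := by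
        exact_mod_cast (card_le_card hsub).trans card_biUnion_le
    _ ≤ ∑ j ∈ range n, NADS 3 k t :=
        sum_le_sum fun j _ => card_toFinset_le_NADS (isADS_flatten_localBlocks ht hnd hcount hS j)
    _ = n * NADS 3 k t := by rw [sum_const, card_range, nsmul_eq_mul]

def wideBlocks (Bs : List (List ℕ)) (t n k' : ℕ) : List (List ℕ) :=
  (List.range n).map fun j =>
    (blockGroup Bs t j).flatten.dedup.filter fun a => k' ≤ #(groupsOf Bs t a)

theorem mem_getD_wideBlocks (ht : 0 < t) {n k' a j : ℕ} :
    a ∈ (wideBlocks Bs t n k').getD j [] ↔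
      j < n ∧ j ∈ groupsOf Bs t a ∧ k' ≤ #(groupsOf Bs t a) := by
  by_cases hj : j < n
  · simp [wideBlocks, List.getD_eq_getElem?_getD, hj, mem_flatten_blockGroup ht]
  · simp [wideBlocks, List.getD_eq_getElem?_getD, hj]

theorem blocksOf_wideBlocks (ht : 0 < t) {n : ℕ} (hlen : Bs.length ≤ n * t) {k' a : ℕ}
    (ha : k' ≤ #(groupsOf Bs t a)) : blocksOf (wideBlocks Bs t n k') a = groupsOf Bs t a := by
  ext j
  rw [mem_blocksOf, mem_getD_wideBlocks ht]
  exact ⟨fun h => h.2.1, fun h => ⟨mem_range.1 (groupsOf_subset_range hlen a h), h, ha⟩⟩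

theorem isADS_flatten_wideBlocks (ht : 0 < t) {n : ℕ} (hlen : Bs.length ≤ n * t)
    (hS : ¬ HasAlt Bs.flatten 5) (k' : ℕ) : IsADS 3 k' n (wideBlocks Bs t n k').flatten := by
  have hsub : (wideBlocks Bs t n k').flatten.Sublist Bs.flatten := by
    have h := List.Sublist.flatMap_right (List.range n) (f := fun j =>
      (blockGroup Bs t j).flatten.dedup.filter fun a => k' ≤ #(groupsOf Bs t a))
      (g := fun j => (blockGroup Bs t j).flatten)
      fun j _ => List.filter_sublist.trans (List.dedup_sublist _)
    have hgroups : (List.range n).map (fun j => (blockGroup Bs t j).flatten) =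
        ((List.range n).map (blockGroup Bs t)).map List.flatten := (List.map_map ..).symm
    rwa [List.flatMap_def, List.flatMap_def, hgroups, ← List.flatten_flatten,
      flatten_map_blockGroup_range, List.take_of_length_le hlen] at h
  have hnd : ∀ B ∈ wideBlocks Bs t n k', B.Nodup := by
    simp only [wideBlocks, List.mem_map]
    rintro _ ⟨j, _, rfl⟩
    exact (List.nodup_dedup _).filter _
  refine ⟨⟨wideBlocks Bs t n k', by simp [wideBlocks], rfl, hnd⟩, fun a ha => ?_,
    fun h => hS (h.mono hsub)⟩
  obtain ⟨j, hj⟩ := mem_flatten_iff_nonempty_blocksOf.1 ha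
  have hwide := ((mem_getD_wideBlocks ht).1 (mem_blocksOf.1 hj)).2.2
  rwa [count_flatten_eq_card_blocksOf hnd, blocksOf_wideBlocks ht hlen hwide]

theorem card_wide_le (ht : 0 < t) {n : ℕ} (hlen : Bs.length ≤ n * t)
    (hS : ¬ HasAlt Bs.flatten 5) (k' : ℕ) :
    (#{a ∈ Bs.flatten.toFinset | k' ≤ #(groupsOf Bs t a)} : ℕ∞) ≤ NADS 3 k' n := by
  refine le_trans ?_ (card_toFinset_le_NADS (isADS_flatten_wideBlocks ht hlen hS k'))
  refine Nat.cast_le.2 (card_le_card fun a ha => ?_)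
  obtain ⟨ha, hwide⟩ := mem_filter.1 ha
  rw [List.mem_toFinset, mem_flatten_iff_nonempty_blocksOf, blocksOf_wideBlocks ht hlen hwide]
  exact (mem_flatten_iff_nonempty_blocksOf.1 (List.mem_toFinset.1 ha)).image _

end Grouping

def nthSmallest (s : Finset ℕ) (q : ℕ) : ℕ :=
  (s.sort (· ≤ ·)).getD q 0

theorem nthSmallest_mem {s : Finset ℕ} {q : ℕ} (hq : q < #s) : nthSmallest s q ∈ s := by
  have hlen : q < (s.sort (· ≤ ·)).length := by rwa [length_sort]
  rw [nthSmallest, List.getD_eq_getElem _ _ hlen]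
  exact (mem_sort _).1 (List.getElem_mem hlen)

theorem nthSmallest_lt_nthSmallest {s : Finset ℕ} {q q' : ℕ} (hqq' : q < q') (hq' : q' < #s) :
    nthSmallest s q < nthSmallest s q' := by
  have hlen' : q' < (s.sort (· ≤ ·)).length := by rwa [length_sort]
  have hlen : q < (s.sort (· ≤ ·)).length := hqq'.trans hlen'
  rw [nthSmallest, nthSmallest, List.getD_eq_getElem _ _ hlen, List.getD_eq_getElem _ _ hlen']
  exact List.pairwise_iff_getElem.1 (sortedLT_sort s).pairwise q q' hlen hlen' hqq'

section Charging

variable {Bs : List (List ℕ)} {t : ℕ}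

def secondBlockInGroup (Bs : List (List ℕ)) (t a j : ℕ) : ℕ :=
  nthSmallest (blocksInGroup Bs t a j) 1

theorem secondBlockInGroup_spec {a j : ℕ} (h : 2 ≤ #(blocksInGroup Bs t a j)) :
    a ∈ Bs.getD (secondBlockInGroup Bs t a j) [] ∧ secondBlockInGroup Bs t a j / t = j ∧
      ∃ i < secondBlockInGroup Bs t a j, a ∈ Bs.getD i [] ∧ i / t = j := by
  obtain ⟨hβ, hβj⟩ := mem_filter.1 (nthSmallest_mem (q := 1) h)
  obtain ⟨h₀, h₀j⟩ := mem_filter.1 (nthSmallest_mem (q := 0) (two_pos.trans_le h))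
  exact ⟨mem_blocksOf.1 hβ, hβj, _, nthSmallest_lt_nthSmallest zero_lt_one h,
    mem_blocksOf.1 h₀, h₀j⟩

theorem exists_block_gt_secondBlockInGroup {a j : ℕ} (h : 3 ≤ #(blocksInGroup Bs t a j)) :
    ∃ i > secondBlockInGroup Bs t a j, a ∈ Bs.getD i [] ∧ i / t = j := by
  obtain ⟨h₂, h₂j⟩ := mem_filter.1 (nthSmallest_mem (q := 2) h)
  exact ⟨_, nthSmallest_lt_nthSmallest one_lt_two h, mem_blocksOf.1 h₂, h₂j⟩

theorem exists_block_lt_of_group_lt {a j i : ℕ} (hj : j ∈ groupsOf Bs t a) (hji : j < i / t) :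
    ∃ i' < i, a ∈ Bs.getD i' [] := by
  obtain ⟨i', hi', rfl⟩ := mem_image.1 hj
  exact ⟨i', Nat.lt_of_div_lt_div hji, mem_blocksOf.1 hi'⟩

theorem exists_block_gt_of_group_gt {a j i : ℕ} (hj : j ∈ groupsOf Bs t a) (hji : i / t < j) :
    ∃ i' > i, a ∈ Bs.getD i' [] := by
  obtain ⟨i', hi', rfl⟩ := mem_image.1 hj
  exact ⟨i', Nat.lt_of_div_lt_div hji, mem_blocksOf.1 hi'⟩

def CollisionFree (Bs : List (List ℕ)) (t : ℕ) (P : ℕ → ℕ → Prop) : Prop :=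
  ∀ a c j, P a j → P c j → secondBlockInGroup Bs t c j = secondBlockInGroup Bs t a j →
    ¬ flatPos Bs (secondBlockInGroup Bs t a j) a < flatPos Bs (secondBlockInGroup Bs t a j) c

theorem card_le_length_of_collisionFree (P : ℕ → ℕ → Prop)
    (hP : ∀ a j, P a j → 2 ≤ #(blocksInGroup Bs t a j)) (hfree : CollisionFree Bs t P)
    {s : Finset ℕ} (hs : ∀ a ∈ s, ∃ j, P a j) : #s ≤ Bs.length := by
  choose! J hJ using hs
  have hspec : ∀ a ∈ s, a ∈ Bs.getD (secondBlockInGroup Bs t a (J a)) [] ∧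
      secondBlockInGroup Bs t a (J a) / t = J a := fun a ha =>
    (secondBlockInGroup_spec (hP a _ (hJ a ha))).imp_right And.left
  have hmaps : Set.MapsTo (fun a => secondBlockInGroup Bs t a (J a)) s (range Bs.length) :=
    fun a ha => mem_range.2 (lt_length_of_mem_blocksOf (mem_blocksOf.2 (hspec a ha).1))
  simpa using card_le_card_of_injOn _ hmaps fun a ha c hc hβ => by
    by_contra hac
    obtain ⟨haβ, hJa⟩ := hspec a ha
    obtain ⟨hcβ, hJc⟩ := hspec c hc
    have hJ' : J c = J a := by rw [← hJa, ← hJc, hβ]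
    rw [hJ'] at hβ hcβ
    rw [← hβ] at hcβ
    rcases Nat.lt_or_gt_of_ne (flatPos_ne_flatPos haβ hcβ hac) with hlt | hlt
    · exact hfree a c (J a) (hJ a ha) (hJ' ▸ hJ c hc) hβ.symm hlt
    · exact hfree c a (J a) (hJ' ▸ hJ c hc) (hJ a ha) hβ (hβ ▸ hlt)

def RepeatsInInnerGroup (Bs : List (List ℕ)) (t a j : ℕ) : Prop :=
  2 ≤ #(blocksInGroup Bs t a j) ∧ (∃ j' ∈ groupsOf Bs t a, j' < j) ∧
    ∃ j' ∈ groupsOf Bs t a, j < j'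

def ThriceInGroupWithLater (Bs : List (List ℕ)) (t a j : ℕ) : Prop :=
  3 ≤ #(blocksInGroup Bs t a j) ∧ ∃ j' ∈ groupsOf Bs t a, j < j'

def ThriceInGroupWithEarlier (Bs : List (List ℕ)) (t a j : ℕ) : Prop :=
  3 ≤ #(blocksInGroup Bs t a j) ∧ ∃ j' ∈ groupsOf Bs t a, j' < j

theorem collisionFree_repeatsInInnerGroup (hS : ¬ HasAlt Bs.flatten 5) :
    CollisionFree Bs t (RepeatsInInnerGroup Bs t) := by
  rintro a c j ⟨ha₂, ⟨j₀, hj₀, hj₀j⟩, j₄, hj₄, hjj₄⟩ hc hβ hlt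
  have hac : a ≠ c := by rintro rfl; exact lt_irrefl _ hlt
  obtain ⟨haβ, hβj, -⟩ := secondBlockInGroup_spec ha₂
  obtain ⟨hcβ, -, i₁, h₁β, hc₁, h₁j⟩ := secondBlockInGroup_spec hc.1
  rw [hβ] at hcβ h₁β
  obtain ⟨i₀, h₀, ha₀⟩ := exists_block_lt_of_group_lt hj₀ (h₁j.symm ▸ hj₀j)
  obtain ⟨i₄, h₄, ha₄⟩ := exists_block_gt_of_group_gt hj₄ (hβj.symm ▸ hjj₄)
  exact hS (hasAlt_five_of_flatPos hac ha₀ hc₁ haβ hcβ ha₄ (flatPos_lt_flatPos h₀ ha₀ c)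
    (flatPos_lt_flatPos h₁β hc₁ a) hlt (flatPos_lt_flatPos h₄ hcβ a))

theorem collisionFree_thriceInGroupWithLater (hS : ¬ HasAlt Bs.flatten 5) :
    CollisionFree Bs t (ThriceInGroupWithLater Bs t) := by
  rintro a c j ha ⟨hc₃, j₄, hj₄, hjj₄⟩ hβ hlt
  have hac : a ≠ c := by rintro rfl; exact lt_irrefl _ hlt
  obtain ⟨haβ, -, -⟩ := secondBlockInGroup_spec (Nat.le_of_succ_le ha.1)
  obtain ⟨i₃, hβ₃, ha₃, h₃j⟩ := exists_block_gt_secondBlockInGroup ha.1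
  obtain ⟨hcβ, -, i₁, h₁β, hc₁, -⟩ := secondBlockInGroup_spec (Nat.le_of_succ_le hc₃)
  rw [hβ] at hcβ h₁β
  obtain ⟨i₄, h₄, hc₄⟩ := exists_block_gt_of_group_gt hj₄ (h₃j.symm ▸ hjj₄)
  exact hS (hasAlt_five_of_flatPos hac.symm hc₁ haβ hcβ ha₃ hc₄
    (flatPos_lt_flatPos h₁β hc₁ a) hlt (flatPos_lt_flatPos hβ₃ hcβ a)
    (flatPos_lt_flatPos h₄ ha₃ c))

theorem collisionFree_thriceInGroupWithEarlier (hS : ¬ HasAlt Bs.flatten 5) :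
    CollisionFree Bs t (ThriceInGroupWithEarlier Bs t) := by
  rintro a c j ⟨hthrice, j₀, hj₀, hj₀j⟩ hc hβ hlt
  have hac : a ≠ c := by rintro rfl; exact lt_irrefl _ hlt
  obtain ⟨haβ, -, -⟩ := secondBlockInGroup_spec (Nat.le_of_succ_le hthrice)
  obtain ⟨i₃, hβ₃, ha₃, -⟩ := exists_block_gt_secondBlockInGroup hthrice
  obtain ⟨hcβ, -, i₁, h₁β, hc₁, h₁j⟩ :=
    secondBlockInGroup_spec (Nat.le_of_succ_le hc.1)
  rw [hβ] at hcβ h₁β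
  obtain ⟨i₀, h₀, ha₀⟩ := exists_block_lt_of_group_lt hj₀ (h₁j.symm ▸ hj₀j)
  exact hS (hasAlt_five_of_flatPos hac ha₀ hc₁ haβ hcβ ha₃ (flatPos_lt_flatPos h₀ ha₀ c)
    (flatPos_lt_flatPos h₁β hc₁ a) hlt (flatPos_lt_flatPos hβ₃ hcβ a))

theorem exists_repeatsInInnerGroup_or_thriceInGroup {a : ℕ} (h₂ : 2 ≤ #(groupsOf Bs t a))
    (hk : #(groupsOf Bs t a) + 3 ≤ #(blocksOf Bs a)) : ∃ j, RepeatsInInnerGroup Bs t a j ∨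
      ThriceInGroupWithLater Bs t a j ∨ ThriceInGroupWithEarlier Bs t a j := by
  by_contra! hnone
  set G := groupsOf Bs t a
  have hG : G.Nonempty := card_pos.1 (by omega)
  have hlt : G.min' hG < G.max' hG := min'_lt_max'_of_card G (by omega)
  have hbound : ∀ j ∈ G, #(blocksInGroup Bs t a j) ≤
      1 + (if j = G.min' hG then 1 else 0) + (if j = G.max' hG then 1 else 0) := by
    intro j hj
    obtain ⟨hR, hL, hE⟩ := hnone j
    by_cases hmin : j = G.min' hG
    · have : ¬ 3 ≤ #(blocksInGroup Bs t a j) := fun h =>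
        hL ⟨h, _, max'_mem G hG, hmin ▸ hlt⟩
      rw [if_pos hmin]
      omega
    by_cases hmax : j = G.max' hG
    · have : ¬ 3 ≤ #(blocksInGroup Bs t a j) := fun h =>
        hE ⟨h, _, min'_mem G hG, hmax ▸ hlt⟩
      rw [if_neg hmin, if_pos hmax]
      omega
    have : ¬ 2 ≤ #(blocksInGroup Bs t a j) := fun h => hR ⟨h,
      ⟨_, min'_mem G hG, lt_of_le_of_ne (min'_le G j hj) (Ne.symm hmin)⟩,
      ⟨_, max'_mem G hG, lt_of_le_of_ne (le_max' G j hj) hmax⟩⟩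
    rw [if_neg hmin, if_neg hmax]
    omega
  have hsum : #(blocksOf Bs a) ≤ #G + 2 := calc
    #(blocksOf Bs a) = ∑ j ∈ G, #(blocksInGroup Bs t a j) := card_eq_sum_card_image _ _
    _ ≤ ∑ j ∈ G, (1 + (if j = G.min' hG then 1 else 0) + (if j = G.max' hG then 1 else 0)) :=
      sum_le_sum hbound
    _ = #G + 2 := by
      rw [sum_add_distrib, sum_add_distrib, sum_ite_eq', sum_ite_eq', if_pos (min'_mem G hG),
        if_pos (max'_mem G hG)]
      simp
  omega

theorem card_le_three_mul_length (hS : ¬ HasAlt Bs.flatten 5) {s : Finset ℕ}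
    (hs : ∀ a ∈ s, 2 ≤ #(groupsOf Bs t a) ∧ #(groupsOf Bs t a) + 3 ≤ #(blocksOf Bs a)) :
    #s ≤ 3 * Bs.length := by
  classical
  have h₁ := card_le_length_of_collisionFree _ (fun _ _ h => h.1)
    (collisionFree_repeatsInInnerGroup hS) (s := {a ∈ s | ∃ j, RepeatsInInnerGroup Bs t a j})
    fun a ha => (mem_filter.1 ha).2
  have h₂ := card_le_length_of_collisionFree _ (fun _ _ h => Nat.le_of_succ_le h.1)
    (collisionFree_thriceInGroupWithLater hS)
    (s := {a ∈ s | ∃ j, ThriceInGroupWithLater Bs t a j}) fun a ha => (mem_filter.1 ha).2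
  have h₃ := card_le_length_of_collisionFree _ (fun _ _ h => Nat.le_of_succ_le h.1)
    (collisionFree_thriceInGroupWithEarlier hS)
    (s := {a ∈ s | ∃ j, ThriceInGroupWithEarlier Bs t a j}) fun a ha => (mem_filter.1 ha).2
  have hcover : s ⊆ {a ∈ s | ∃ j, RepeatsInInnerGroup Bs t a j} ∪
      {a ∈ s | ∃ j, ThriceInGroupWithLater Bs t a j} ∪
      {a ∈ s | ∃ j, ThriceInGroupWithEarlier Bs t a j} := by
    intro a ha
    simp only [mem_union, mem_filter]
    obtain ⟨j, h | h | h⟩ := exists_repeatsInInnerGroup_or_thriceInGroup (hs a ha).1 (hs a ha).2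
    all_goals tauto
  have := (card_le_card hcover).trans ((card_union_le _ _).trans
    (Nat.add_le_add_right (card_union_le _ _) _))
  omega

end Charging

theorem card_toFinset_flatten_le {Bs : List (List ℕ)} {k t n : ℕ} (ht : 0 < t)
    (hnd : ∀ B ∈ Bs, B.Nodup) (hcount : ∀ a ∈ Bs.flatten, k ≤ Bs.flatten.count a)
    (hS : ¬ HasAlt Bs.flatten 5) (hlen : Bs.length ≤ n * t) :
    (#Bs.flatten.toFinset : ℕ∞) ≤
      n * NADS 3 k t + NADS 3 (k - 2) n + (3 * Bs.length : ℕ) := by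
  set S := Bs.flatten.toFinset
  set L := {a ∈ S | #(groupsOf Bs t a) ≤ 1}
  set W := {a ∈ S | k - 2 ≤ #(groupsOf Bs t a)}
  set P := {a ∈ S | ¬ #(groupsOf Bs t a) ≤ 1 ∧ ¬ k - 2 ≤ #(groupsOf Bs t a)}
  have hsplit : #S ≤ #L + #W + #P := by
    have hcover : S ⊆ L ∪ W ∪ P := fun a ha => by
      simp only [L, W, P, mem_union, mem_filter]
      tauto
    exact (card_le_card hcover).trans ((card_union_le _ _).trans
      (Nat.add_le_add_right (card_union_le _ _) _))
  have hP : #P ≤ 3 * Bs.length := card_le_three_mul_length (t := t) hS fun a ha => by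
    obtain ⟨ha, hloc, hwide⟩ := mem_filter.1 ha
    have := hcount a (List.mem_toFinset.1 ha)
    rw [count_flatten_eq_card_blocksOf hnd] at this
    omega
  calc (#S : ℕ∞) ≤ #L + #W + #P := by exact_mod_cast hsplit
    _ ≤ _ := by
      gcongr
      · exact card_local_le ht hnd hcount hS hlen
      · exact card_wide_le ht hlen hS (k - 2)

/-- For `k ≥ 3`, `m ≥ 1`, `t ≥ 1` with `t² ≤ m`, and `b = ⌈m/t⌉`:
`N^3_k(m) ≤ b·N^3_k(t) + N^3_{k−2}(b) + 3m` in the extended naturals. -/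
theorem NADS3_recurrence :
    ∀ k m t : ℕ, 3 ≤ k → 1 ≤ m → 1 ≤ t → t ^ 2 ≤ m →
      NADS 3 k m ≤ (((m + t - 1) / t : ℕ) : ℕ∞) * NADS 3 k t
        + NADS 3 (k - 2) ((m + t - 1) / t) + ((3 * m : ℕ) : ℕ∞) := by
  intro k m t _ _ ht _
  have hm : m ≤ (m + t - 1) / t * t := by
    have := Nat.lt_div_mul_add (a := m + t - 1) ht
    omega
  refine sSup_le ?_
  rintro _ ⟨_, ⟨⟨Bs, hlen, rfl, hnd⟩, hcount, hS⟩, rfl⟩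
  refine (card_toFinset_flatten_le ht hnd hcount hS (hlen.trans hm)).trans ?_
  gcongr
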